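/- Let d ≥ 4 and c ≤ 2^d be positive integers and V a finite set with |V| ≥ d. For every hereditary family H ⊆ 2^V with |H| ≥ 2^d − c, we have ∑_{H ∈ H} 1/(|H|+1) ≥ W(2^d − c). Moreover, if H has e non-isolated vertices with e > d, then ∑_{H ∈ H} 1/(|H|+1) ≥ W(2^d − c) + (e−d)/6. -/

import Mathlib

/-!
Writing `k = ∑ 2 ^ i` identifies the `k`-th colex set with the binary digits of `k`, so
`W(m) = ∑_{k < m} 1 / (popcount k + 1)`. The heart is a counting form of Katona's theorem: a
hereditary family `𝒜` has at least as many members `s` with `|s| + i ≤ j` as there are `k < |𝒜|`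
with `popcount k + i ≤ j`. Splitting `𝒜` at a vertex `a` into the sets avoiding `a` and the
links of `a` (a subfamily of the former), this reduces to the numerical inequality
`C_i(m₀ + m₁) ≤ C_i(m₀) + C_{i+1}(m₁)` for `m₁ ≤ m₀`, where
`C_i(m) = #{k < m | popcount k + i ≤ j} = lowWeightCount i j (range m)`. It is proved by strong
induction: peel off powers of two, and where that fails reflect `k ↦ 2 ^ u - 1 - k`, which turns
`popcount` into `u - popcount`. Abel summation then gives the weighted inequality for every
antitone weight.

For the second bound use the weight `1 / (n + 1) - [n ≤ 1] / 6`, which is still antitone (it takes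
the value `1 / 3` at both `1` and `2`) and nonnegative. It charges `1 / 6` for each set of size at
most one: the family has at least `e + 1` of them (`∅` and the singletons of the non-isolated
vertices), whereas at most `d + 1` numbers below `2 ^ d` have `popcount ≤ 1`.
-/

open Finset

/-- The `k`-th finite subset of `ℕ⁺` in colexicographic order (zero-indexed). -/
def decodeSet (k : ℕ) : Finset ℕ :=
  ((Finset.range (k + 1)).filter (fun i => k.testBit i)).image (· + 1)

/-- `Rfam m`: the family of the first `m` finite subsets of `ℕ⁺` in colexicographic order. -/
def Rfam (m : ℕ) : Finset (Finset ℕ) :=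
  (Finset.range m).image decodeSet

/-- `W(m) = ∑_{R ∈ R(m)} 1/(|R|+1)`. -/
noncomputable def Wfun (m : ℕ) : ℝ :=
  ∑ R ∈ Rfam m, 1 / (R.card + 1)

def popcount (n : ℕ) : ℕ := n.bitIndices.length

@[simp] lemma popcount_zero : popcount 0 = 0 := by simp [popcount]

lemma popcount_eq_mod_add_div (n : ℕ) : popcount n = n % 2 + popcount (n / 2) := by
  obtain ⟨m, rfl | rfl⟩ := Nat.even_or_odd' n
  · simp [popcount]
  · simp [popcount, Nat.mul_add_div]
    omega

lemma popcount_two_pow_add {t k : ℕ} (hk : k < 2 ^ t) :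
    popcount (2 ^ t + k) = popcount k + 1 := by
  induction t generalizing k with
  | zero =>
    obtain rfl : k = 0 := by omega
    simp [popcount]
  | succ t ih =>
    rw [popcount_eq_mod_add_div, popcount_eq_mod_add_div k, pow_succ,
      show (2 ^ t * 2 + k) / 2 = 2 ^ t + k / 2 by omega, ih (by rw [pow_succ] at hk; omega)]
    omega

lemma popcount_add_popcount_two_pow_sub {u k : ℕ} (hk : k < 2 ^ u) :
    popcount k + popcount (2 ^ u - 1 - k) = u := by
  induction u generalizing k with
  | zero =>
    obtain rfl : k = 0 := by omega
    simp
  | succ u ih =>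
    rw [pow_succ] at hk ⊢
    rw [popcount_eq_mod_add_div k, popcount_eq_mod_add_div (2 ^ u * 2 - 1 - k),
      show (2 ^ u * 2 - 1 - k) / 2 = 2 ^ u - 1 - k / 2 by omega]
    have := ih (k := k / 2) (by omega)
    omega

lemma eq_zero_or_eq_two_pow_of_popcount_le_one {n : ℕ} (h : popcount n ≤ 1) :
    n = 0 ∨ ∃ i, n = 2 ^ i := by
  have hsum := Nat.sum_map_two_pow_bitIndices n
  unfold popcount at h
  match hn : n.bitIndices, h with
  | [], _ => simp_all
  | [i], _ => exact Or.inr ⟨i, by simp_all⟩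
  | _ :: _ :: _, h => simp at h

lemma decodeSet_eq (k : ℕ) : decodeSet k = k.bitIndices.toFinset.image (· + 1) := by
  ext x
  simp only [decodeSet, mem_image, mem_filter, mem_range, List.mem_toFinset, Nat.mem_bitIndices]
  refine exists_congr fun i => and_congr_left fun _ => and_iff_right_of_imp fun hi => ?_
  have := Nat.ge_two_pow_of_testBit hi
  have := i.lt_two_pow_self
  omega

lemma card_decodeSet (k : ℕ) : #(decodeSet k) = popcount k := by
  rw [decodeSet_eq, card_image_of_injective _ (add_left_injective 1),
    List.toFinset_card_of_nodup Nat.bitIndices_nodup, popcount]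

lemma decodeSet_injective : Function.Injective decodeSet := fun k l h => by
  rw [decodeSet_eq, decodeSet_eq] at h
  exact Finset.equivBitIndices.injective ((image_injective (add_left_injective 1)) h)

lemma Wfun_eq_sum_range (m : ℕ) : Wfun m = ∑ k ∈ range m, (1 : ℝ) / (popcount k + 1) := by
  rw [Wfun, Rfam, sum_image fun k _ l _ h => decodeSet_injective h]
  simp_rw [card_decodeSet]

lemma card_filter_popcount_le_one_le {d m : ℕ} (hm : m ≤ 2 ^ d) :
    #{k ∈ range m | popcount k ≤ 1} ≤ d + 1 := by
  calc #{k ∈ range m | popcount k ≤ 1}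
      ≤ #(insert 0 ((range d).image (2 ^ ·))) := by
        refine card_le_card fun k hk => ?_
        simp only [mem_filter, mem_range] at hk
        rcases eq_zero_or_eq_two_pow_of_popcount_le_one hk.2 with rfl | ⟨i, rfl⟩
        · exact mem_insert_self _ _
        · exact mem_insert_of_mem (mem_image_of_mem _ (mem_range.2
            ((Nat.pow_lt_pow_iff_right one_lt_two).1 (hk.1.trans_le hm))))
    _ ≤ d + 1 := (card_insert_le _ _).trans (by simpa using card_image_le (s := range d))

def lowWeightCount (i j : ℕ) (s : Finset ℕ) : ℕ := #{k ∈ s | popcount k + i ≤ j}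

lemma lowWeightCount_succ_le (i j : ℕ) (s : Finset ℕ) :
    lowWeightCount (i + 1) j s ≤ lowWeightCount i j s :=
  card_le_card <| monotone_filter_right _ fun _ h => by omega

lemma lowWeightCount_range_eq_add_Ico (i j : ℕ) {a b : ℕ} (h : a ≤ b) :
    lowWeightCount i j (range b) =
      lowWeightCount i j (range a) + lowWeightCount i j (Ico a b) := by
  rw [lowWeightCount, range_eq_Ico, ← Ico_union_Ico_eq_Ico (Nat.zero_le a) h, filter_union,
    card_union_of_disjoint (disjoint_filter_filter (Ico_disjoint_Ico_consecutive 0 a b)),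
    ← range_eq_Ico]
  rfl

lemma lowWeightCount_Ico_two_pow (i j : ℕ) {t r : ℕ} (hr : r ≤ 2 ^ t) :
    lowWeightCount i j (Ico (2 ^ t) (2 ^ t + r)) = lowWeightCount (i + 1) j (range r) := by
  have himage : Ico (2 ^ t) (2 ^ t + r) = (range r).image (2 ^ t + ·) := by
    rw [range_eq_Ico, image_add_left_Ico, add_zero]
  rw [lowWeightCount, himage, filter_image, card_image_of_injective _ (add_right_injective _),
    lowWeightCount]
  refine congrArg card (filter_congr fun k hk => ?_)
  rw [popcount_two_pow_add ((mem_range.1 hk).trans_le hr)]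
  omega

lemma lowWeightCount_range_two_pow_add (i j : ℕ) {t r : ℕ} (hr : r ≤ 2 ^ t) :
    lowWeightCount i j (range (2 ^ t + r)) =
      lowWeightCount i j (range (2 ^ t)) + lowWeightCount (i + 1) j (range r) := by
  rw [lowWeightCount_range_eq_add_Ico i j (Nat.le_add_right _ r), lowWeightCount_Ico_two_pow i j hr]

lemma lowWeightCount_Ico_add_lowWeightCount_Ico_compl (i j : ℕ) {u s b : ℕ} (hb : b ≤ 2 ^ u)
    (hsb : s ≤ b) :
    lowWeightCount i j (Ico s b) + lowWeightCount (j + 1) (u + i) (Ico (2 ^ u - b) (2 ^ u - s)) =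
      b - s := by
  have himage : Ico (2 ^ u - b) (2 ^ u - s) = (Ico s b).image (2 ^ u - 1 - ·) := by
    ext x
    simp only [mem_Ico, mem_image]
    exact ⟨fun hx => ⟨2 ^ u - 1 - x, by omega, by omega⟩, by rintro ⟨k, hk, rfl⟩; omega⟩
  have hinj : Set.InjOn (2 ^ u - 1 - ·) (Ico s b : Set ℕ) := fun k hk l hl h => by
    simp only [coe_Ico, Set.mem_Ico] at hk hl h
    omega
  rw [himage, lowWeightCount, lowWeightCount, filter_image,
    card_image_of_injOn (hinj.mono (filter_subset _ _)), ← Nat.card_Ico s b,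
    ← card_filter_add_card_filter_not (s := Ico s b) (fun k => popcount k + i ≤ j)]
  congr 2
  refine filter_congr fun k hk => ?_
  have := popcount_add_popcount_two_pow_sub (u := u) (k := k) (by simp at hk; omega)
  omega

lemma lowWeightCount_range_add_le_add_of_shifted {n : ℕ}
    (ih : ∀ i j x y, y ≤ x → x + y < n → lowWeightCount i j (range (x + y)) ≤
      lowWeightCount i j (range x) + lowWeightCount (i + 1) j (range y))
    (i j : ℕ) {x y : ℕ} (h : x + y < n) :
    lowWeightCount i j (range (x + y)) ≤
      lowWeightCount i j (range x) + lowWeightCount i j (range y) := by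
  rcases le_total y x with hyx | hxy
  · exact (ih i j x y hyx h).trans (add_le_add_right (lowWeightCount_succ_le i j _) _)
  · rw [add_comm x, add_comm (lowWeightCount i j _)]
    exact (ih i j y x hxy (by omega)).trans (add_le_add_right (lowWeightCount_succ_le i j _) _)

/-- Reflecting `[0, 2 ^ u)` turns the count over `[r, 2 ^ u)` into a complementary count over
`[0, 2 ^ u - r)`, where subadditivity applies. -/
lemma lowWeightCount_range_two_pow_add_le (i j : ℕ) {u r s m : ℕ} (hr : r ≤ 2 ^ u)
    (hm : m ≤ 2 ^ u) (hs : s + 2 ^ u = r + m)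
    (hsub : lowWeightCount (j + 1) (u + i) (range ((2 ^ u - m) + (2 ^ u - r))) ≤
      lowWeightCount (j + 1) (u + i) (range (2 ^ u - m)) +
        lowWeightCount (j + 1) (u + i) (range (2 ^ u - r))) :
    lowWeightCount i j (range (2 ^ u)) + lowWeightCount i j (range s) ≤
      lowWeightCount i j (range r) + lowWeightCount i j (range m) := by
  have hupper := lowWeightCount_range_eq_add_Ico i j hr
  have hlower := lowWeightCount_range_eq_add_Ico i j (show s ≤ m by omega)
  have hreflect_upper := lowWeightCount_Ico_add_lowWeightCount_Ico_compl i j le_rfl hr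
  have hreflect_lower :=
    lowWeightCount_Ico_add_lowWeightCount_Ico_compl i j hm (show s ≤ m by omega)
  have hsplit := lowWeightCount_range_eq_add_Ico (j + 1) (u + i)
    (show 2 ^ u - m ≤ 2 ^ u - s by omega)
  rw [Nat.sub_self, ← range_eq_Ico] at hreflect_upper
  rw [show 2 ^ u - m + (2 ^ u - r) = 2 ^ u - s by omega] at hsub
  omega

theorem lowWeightCount_range_add_le {m₀ m₁ : ℕ} (h : m₁ ≤ m₀) (i j : ℕ) :
    lowWeightCount i j (range (m₀ + m₁)) ≤
      lowWeightCount i j (range m₀) + lowWeightCount (i + 1) j (range m₁) := by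
  induction hn : m₀ + m₁ using Nat.strong_induction_on generalizing m₀ m₁ i j with
  | _ n ih =>
  have ih' : ∀ i j x y, y ≤ x → x + y < n → lowWeightCount i j (range (x + y)) ≤
      lowWeightCount i j (range x) + lowWeightCount (i + 1) j (range y) :=
    fun i j x y hyx hlt => ih _ hlt hyx i j rfl
  subst hn
  rcases Nat.eq_zero_or_pos m₁ with rfl | hm₁
  · simp [lowWeightCount]
  set t := Nat.log 2 m₀
  have ht : 2 ^ t ≤ m₀ := Nat.pow_log_le_self 2 (by omega)
  have ht' : m₀ < 2 ^ (t + 1) := Nat.lt_pow_succ_log_self one_lt_two m₀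
  have hpow : 2 ^ (t + 1) = 2 ^ t + 2 ^ t := by ring
  rw [show m₀ = 2 ^ t + (m₀ - 2 ^ t) by omega, lowWeightCount_range_two_pow_add i j (by omega)]
  by_cases hN : m₀ + m₁ ≤ 2 ^ (t + 1)
  · rw [add_assoc, lowWeightCount_range_two_pow_add i j (by omega), add_assoc]
    exact add_le_add_right (lowWeightCount_range_add_le_add_of_shifted ih' _ _
      (x := m₀ - 2 ^ t) (y := m₁) (by omega)) _
  rw [show 2 ^ t + (m₀ - 2 ^ t) + m₁ = 2 ^ (t + 1) + (m₀ + m₁ - 2 ^ (t + 1)) by omega,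
    lowWeightCount_range_two_pow_add i j (by omega), hpow,
    lowWeightCount_range_two_pow_add i j le_rfl, ← hpow]
  rcases le_or_gt m₁ (2 ^ t) with hm | hm
  · have := lowWeightCount_range_two_pow_add_le (i + 1) j (u := t) (r := m₀ - 2 ^ t)
      (s := m₀ + m₁ - 2 ^ (t + 1)) (m := m₁) (by omega) hm (by omega)
      (lowWeightCount_range_add_le_add_of_shifted ih' _ _ (by omega))
    omega
  · rw [show m₁ = 2 ^ t + (m₁ - 2 ^ t) by omega,
      lowWeightCount_range_two_pow_add (i + 1) j (by omega),
      show m₀ + (2 ^ t + (m₁ - 2 ^ t)) - 2 ^ (t + 1) = (m₀ - 2 ^ t) + (m₁ - 2 ^ t) by omega]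
    have := ih' (i + 1) j (m₀ - 2 ^ t) (m₁ - 2 ^ t) (by omega) (by omega)
    omega

section Family

variable {α : Type*} [DecidableEq α]

lemma card_filter_card_add_le_eq_add (a : α) (𝒜 : Finset (Finset α)) (i j : ℕ) :
    #{s ∈ 𝒜 | #s + i ≤ j} =
      #{s ∈ 𝒜.nonMemberSubfamily a | #s + i ≤ j} +
        #{s ∈ 𝒜.memberSubfamily a | #s + (i + 1) ≤ j} := by
  rw [← card_memberSubfamily_add_card_nonMemberSubfamily a, add_comm]
  congr 2 <;> ext s
  · simp [and_right_comm]
  · simp only [mem_memberSubfamily, mem_filter]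
    constructor
    · rintro ⟨⟨hs, h⟩, ha⟩
      exact ⟨⟨hs, ha⟩, by rwa [card_insert_of_notMem ha, add_right_comm] at h⟩
    · rintro ⟨⟨hs, ha⟩, h⟩
      exact ⟨⟨hs, by rwa [card_insert_of_notMem ha, add_right_comm]⟩, ha⟩

theorem lowWeightCount_range_card_le {𝒜 : Finset (Finset α)}
    (h𝒜 : IsLowerSet (𝒜 : Set (Finset α))) (i j : ℕ) :
    lowWeightCount i j (range #𝒜) ≤ #{s ∈ 𝒜 | #s + i ≤ j} := by
  induction 𝒜 using memberFamily_induction_on generalizing i with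
  | empty => simp [lowWeightCount]
  | singleton_empty => simp [lowWeightCount, filter_singleton, apply_ite card]
  | subfamily a h₀ h₁ =>
    rw [← card_memberSubfamily_add_card_nonMemberSubfamily a, add_comm,
      card_filter_card_add_le_eq_add a]
    have hcard := card_le_card (h𝒜.memberSubfamily_subset_nonMemberSubfamily (a := a))
    exact (lowWeightCount_range_add_le hcard i j).trans
      (add_le_add (h₀ h𝒜.nonMemberSubfamily i) (h₁ h𝒜.memberSubfamily (i + 1)))

end Family

section LayerCake

variable {ι κ : Type*}

lemma sum_comp_eq_card_mul_add_sum_range (f : ℕ → ℝ) (S : Finset ι) (s : ι → ℕ) {u : ℕ}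
    (hu : ∀ x ∈ S, s x ≤ u) :
    ∑ x ∈ S, f (s x) = #S * f u + ∑ j ∈ range u, (f j - f (j + 1)) * #{x ∈ S | s x ≤ j} := by
  have htelescope : ∀ a ≤ u, f a = f u + ∑ j ∈ range u, if a ≤ j then f j - f (j + 1) else 0 := by
    intro a ha
    have := sum_Ico_sub (fun j => -f j) ha
    simp only [neg_sub_neg] at this
    rw [← sum_filter, show {j ∈ range u | a ≤ j} = Ico a u by ext; simp; omega, this]
    ring
  calc ∑ x ∈ S, f (s x)
      = ∑ x ∈ S, (f u + ∑ j ∈ range u, if s x ≤ j then f j - f (j + 1) else 0) :=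
        sum_congr rfl fun x hx => htelescope _ (hu x hx)
    _ = #S * f u + ∑ j ∈ range u, (f j - f (j + 1)) * #{x ∈ S | s x ≤ j} := by
        rw [sum_add_distrib, sum_const, nsmul_eq_mul, sum_comm]
        congr 1
        refine sum_congr rfl fun j _ => ?_
        rw [← sum_filter, sum_const, nsmul_eq_mul, mul_comm]

theorem sum_le_sum_of_card_filter_le {S : Finset ι} {T : Finset κ} {s : ι → ℕ} {t : κ → ℕ}
    {f : ℕ → ℝ} (hf : Antitone f) (hcard : #S = #T)
    (h : ∀ j, #{x ∈ S | s x ≤ j} ≤ #{y ∈ T | t y ≤ j}) :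
    ∑ x ∈ S, f (s x) ≤ ∑ y ∈ T, f (t y) := by
  set u := S.sup s ⊔ T.sup t
  rw [sum_comp_eq_card_mul_add_sum_range f S s (u := u) fun x hx => le_sup_of_le_left (le_sup hx),
    sum_comp_eq_card_mul_add_sum_range f T t (u := u) fun y hy => le_sup_of_le_right (le_sup hy),
    hcard]
  gcongr with j
  · exact sub_nonneg.2 (hf (Nat.le_succ j))
  · exact_mod_cast h j

end LayerCake

section Katona

variable {α : Type*} [DecidableEq α] {𝒜 : Finset (Finset α)}

theorem sum_range_popcount_le_sum_card (h𝒜 : IsLowerSet (𝒜 : Set (Finset α))) {f : ℕ → ℝ}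
    (hf : Antitone f) : ∑ k ∈ range #𝒜, f (popcount k) ≤ ∑ s ∈ 𝒜, f #s :=
  sum_le_sum_of_card_filter_le hf (card_range _) fun j => by
    simpa [lowWeightCount] using lowWeightCount_range_card_le h𝒜 0 j

theorem sum_range_popcount_le_sum_card_of_le (h𝒜 : IsLowerSet (𝒜 : Set (Finset α)))
    {f : ℕ → ℝ} (hf : Antitone f) (hf₀ : ∀ n, 0 ≤ f n) {m : ℕ} (hm : m ≤ #𝒜) :
    ∑ k ∈ range m, f (popcount k) ≤ ∑ s ∈ 𝒜, f #s :=
  (sum_le_sum_of_subset_of_nonneg (range_subset_range.2 hm) fun _ _ _ => hf₀ _).trans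
    (sum_range_popcount_le_sum_card h𝒜 hf)

lemma card_filter_exists_mem_add_one_le (h𝒜 : IsLowerSet (𝒜 : Set (Finset α)))
    (h𝒜₀ : 𝒜.Nonempty) (V : Finset α) :
    #{v ∈ V | ∃ A ∈ 𝒜, v ∈ A} + 1 ≤ #{A ∈ 𝒜 | #A ≤ 1} := by
  have hempty : ∅ ∈ 𝒜 := h𝒜.bot_mem.2 h𝒜₀
  calc #{v ∈ V | ∃ A ∈ 𝒜, v ∈ A} + 1
      = #(insert ∅ ({v ∈ V | ∃ A ∈ 𝒜, v ∈ A}.image fun v => ({v} : Finset α))) := by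
        rw [card_insert_of_notMem (by simp [eq_comm]),
          card_image_of_injective _ singleton_injective]
    _ ≤ #{A ∈ 𝒜 | #A ≤ 1} := by
        refine card_le_card (insert_subset (by simp [hempty]) fun B hB => ?_)
        obtain ⟨v, hv, rfl⟩ := mem_image.1 hB
        obtain ⟨A, hA, hvA⟩ := (mem_filter.1 hv).2
        exact mem_filter.2 ⟨h𝒜 (singleton_subset_iff.2 hvA) hA, (card_singleton v).le⟩

end Katona

lemma antitone_one_div_succ : Antitone fun n : ℕ => (1 : ℝ) / (n + 1) :=
  fun m n h => one_div_le_one_div_of_le (by positivity) (by exact_mod_cast Nat.succ_le_succ h)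

lemma antitone_one_div_succ_sub_ite :
    Antitone fun n : ℕ => (1 : ℝ) / (n + 1) - if n ≤ 1 then 1 / 6 else 0 := by
  refine antitone_nat_of_succ_le fun n => ?_
  rcases n with _ | _ | n
  · norm_num
  · norm_num
  · have hn : ¬ n + 1 + 1 ≤ 1 := by omega
    have hn' : ¬ n + 1 + 1 + 1 ≤ 1 := by omega
    simp only [hn, hn', if_false, sub_zero]
    exact antitone_one_div_succ (Nat.le_succ _)

lemma one_div_succ_sub_ite_nonneg (n : ℕ) : 0 ≤ (1 : ℝ) / (n + 1) - if n ≤ 1 then 1 / 6 else 0 := by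
  split_ifs with hn
  · interval_cases n <;> norm_num
  · simp only [sub_zero]
    positivity

theorem stmt_7_general {α : Type*} [DecidableEq α] (d c : ℕ)
    (V : Finset α)
    (H : Finset (Finset α))
    (hered : ∀ A ∈ H, ∀ B ⊆ A, B ∈ H)
    (hcard : 2 ^ d - c ≤ H.card) :
    Wfun (2 ^ d - c) ≤ ∑ A ∈ H, (1 : ℝ) / (A.card + 1)
    ∧ ∀ e : ℕ, e = (V.filter (fun v => ∃ A ∈ H, v ∈ A)).card → d < e →
        Wfun (2 ^ d - c) + ((e : ℝ) - d) / 6 ≤ ∑ A ∈ H, (1 : ℝ) / (A.card + 1) := by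
  have hH : IsLowerSet (H : Set (Finset α)) := fun A B hBA hA => hered A hA B hBA
  refine ⟨?_, ?_⟩
  · rw [Wfun_eq_sum_range]
    exact sum_range_popcount_le_sum_card_of_le hH antitone_one_div_succ (fun n => by positivity)
      hcard
  rintro e rfl hde
  obtain ⟨v, hv⟩ := card_pos.1 (show 0 < #{v ∈ V | ∃ A ∈ H, v ∈ A} by omega)
  obtain ⟨A, hA, -⟩ := (mem_filter.1 hv).2
  have hvertices : (#{v ∈ V | ∃ A ∈ H, v ∈ A} : ℝ) + 1 ≤ #{A ∈ H | #A ≤ 1} := by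
    exact_mod_cast card_filter_exists_mem_add_one_le hH ⟨A, hA⟩ V
  have hlow : (#{k ∈ range (2 ^ d - c) | popcount k ≤ 1} : ℝ) ≤ d + 1 := by
    exact_mod_cast card_filter_popcount_le_one_le (Nat.sub_le _ c)
  have hcorrected := sum_range_popcount_le_sum_card_of_le hH antitone_one_div_succ_sub_ite
    one_div_succ_sub_ite_nonneg hcard
  simp only [sum_sub_distrib, sum_ite, sum_const, nsmul_eq_mul,
    ← Wfun_eq_sum_range] at hcorrected
  linarith

/-- a hereditary family `H ⊆ 2^V` with `|H| ≥ 2^d - c` satisfies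
`∑_{H ∈ H} 1/(|H|+1) ≥ W(2^d - c)`, and moreover `≥ W(2^d - c) + (e - d)/6`
if `H` has `e > d` non-isolated vertices. -/
theorem stmt_7 {α : Type*} [DecidableEq α] (d c : ℕ) (hd : 4 ≤ d) (hc1 : 1 ≤ c)
    (hc : c ≤ 2 ^ d)
    (V : Finset α) (hV : d ≤ V.card)
    (H : Finset (Finset α)) (hHV : H ⊆ V.powerset)
    (hered : ∀ A ∈ H, ∀ B ⊆ A, B ∈ H)
    (hcard : 2 ^ d - c ≤ H.card) :
    Wfun (2 ^ d - c) ≤ ∑ A ∈ H, (1 : ℝ) / (A.card + 1)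
    ∧ ∀ e : ℕ, e = (V.filter (fun v => ∃ A ∈ H, v ∈ A)).card → d < e →
        Wfun (2 ^ d - c) + ((e : ℝ) - d) / 6 ≤ ∑ A ∈ H, (1 : ℝ) / (A.card + 1) :=
  stmt_7_general d c V H hered hcard
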